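/- arXiv:0802.3276 — 3 statements merged into one kernel-verified Lean document; each statement's English description precedes it below -/
import Mathlib

section
/- With the notation of the Gaussian quadratic form inequality (λᵢ, δᵢ, γ, λ_max as above, γ > 0), for every η ≥ 0, P( Σᵢ λᵢ((Zᵢ+δᵢ)² − (1+δᵢ²)) ≥ ηγ ) ≤ e^{1/4}·exp(−η/√8). -/
/-!
Chernoff's bound with `t = (√8 γ)⁻¹`. Under the product measure the exponential moment of the
quadratic form factorises over the coordinates, and completing the square gives, for `c < 1/2`,
`E exp (c ((Z + d)² - (1 + d²))) = (1 - 2c)^{-1/2} exp (c d² / (1 - 2c) - c (1 + d²))`.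
For `c ≤ 1/4` the bound `(1 - 2c)⁻¹ ≤ 1 + 2c + 8c²` turns this into `exp (4 c² (1 + d²))`.
The coefficients `c i = t λᵢ` are at most `1/4` because `γ ≥ √2 λ_max`, and the exponents add
up to at most `2 t² γ² = 1/4`, while `exp (-t η γ) = exp (-η/√8)`.
-/

open MeasureTheory ProbabilityTheory Finset Real
open scoped NNReal

theorem measure_pi_le_exp_neg_mul_prod_integral {ι : Type*} [Fintype ι] {Ω : ι → Type*}
    [∀ i, MeasurableSpace (Ω i)] {μ : ∀ i, Measure (Ω i)} [∀ i, IsFiniteMeasure (μ i)]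
    {f : ∀ i, Ω i → ℝ} (hf : ∀ i, Integrable (fun y => exp (f i y)) (μ i)) (a : ℝ) :
    Measure.pi μ {x | a ≤ ∑ i, f i (x i)}
      ≤ ENNReal.ofReal (exp (-a) * ∏ i, ∫ y, exp (f i y) ∂μ i) := by
  have hint : Integrable (fun x => exp (1 * ∑ i, f i (x i))) (Measure.pi μ) := by
    simpa only [one_mul, exp_sum] using Integrable.fintype_prod_dep hf
  have hchernoff := measure_ge_le_exp_mul_mgf a zero_le_one hint
  rw [← ofReal_measureReal]
  refine ENNReal.ofReal_le_ofReal (hchernoff.trans_eq ?_)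
  simp only [mgf, one_mul, neg_mul, exp_sum]
  rw [integral_fintype_prod_eq_prod (fun i y => exp (f i y))]

lemma integrable_gaussianReal_iff {μ : ℝ} {v : ℝ≥0} (hv : v ≠ 0) {f : ℝ → ℝ} :
    Integrable f (gaussianReal μ v) ↔ Integrable (fun x => gaussianPDFReal μ v x * f x) := by
  rw [gaussianReal_of_var_ne_zero _ hv,
    integrable_withDensity_iff_integrable_smul₀' (measurable_gaussianPDF μ v).aemeasurable
      (ae_of_all _ fun _ => gaussianPDF_lt_top)]
  simp only [toReal_gaussianPDF, smul_eq_mul]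

lemma inv_one_sub_two_mul_le {c : ℝ} (hc : c ≤ 1 / 4) : (1 - 2 * c)⁻¹ ≤ 1 + 2 * c + 8 * c ^ 2 := by
  rw [inv_le_iff_one_le_mul₀ (by linarith)]
  nlinarith [sq_nonneg c]

section
variable {c : ℝ} (d : ℝ)

lemma gaussianPDFReal_mul_exp_mul_add_sq (hc : c < 1 / 2) (x : ℝ) :
    gaussianPDFReal 0 1 x * exp (c * (x + d) ^ 2)
      = (√(2 * π))⁻¹ * exp (c * d ^ 2 / (1 - 2 * c))
        * exp (-((1 - 2 * c) / 2) * (x - 2 * c * d / (1 - 2 * c)) ^ 2) := by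
  have : 1 - 2 * c ≠ 0 := by linarith
  rw [gaussianPDFReal, NNReal.coe_one, mul_one, mul_one, sub_zero, mul_assoc, mul_assoc,
    ← exp_add, ← exp_add]
  congr 2
  field_simp
  ring

lemma integrable_exp_mul_add_sq_gaussianReal (hc : c < 1 / 2) :
    Integrable (fun x => exp (c * (x + d) ^ 2)) (gaussianReal 0 1) := by
  rw [integrable_gaussianReal_iff one_ne_zero]
  simp_rw [gaussianPDFReal_mul_exp_mul_add_sq d hc]
  exact ((integrable_exp_neg_mul_sq (by linarith)).comp_sub_right _).const_mul _

lemma integral_exp_mul_add_sq_gaussianReal (hc : c < 1 / 2) :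
    ∫ x, exp (c * (x + d) ^ 2) ∂gaussianReal 0 1
      = (√(1 - 2 * c))⁻¹ * exp (c * d ^ 2 / (1 - 2 * c)) := by
  have h2c : 0 < 1 - 2 * c := by linarith
  simp_rw [integral_gaussianReal_eq_integral_smul one_ne_zero, smul_eq_mul,
    gaussianPDFReal_mul_exp_mul_add_sq d hc, integral_const_mul,
    integral_sub_right_eq_self (fun x => exp (-((1 - 2 * c) / 2) * x ^ 2)), integral_gaussian]
  rw [show π / ((1 - 2 * c) / 2) = 2 * π / (1 - 2 * c) by field_simp,
    sqrt_div (by positivity)]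
  have : 0 < √(2 * π) := by positivity
  field_simp

lemma integrable_exp_mul_sq_sub_gaussianReal (hc : c < 1 / 2) (k : ℝ) :
    Integrable (fun x => exp (c * ((x + d) ^ 2 - k))) (gaussianReal 0 1) := by
  refine ((integrable_exp_mul_add_sq_gaussianReal d hc).mul_const (exp (-(c * k)))).congr
    (ae_of_all _ fun x => ?_)
  simp only [← exp_add]
  ring_nf

lemma integral_exp_mul_sq_sub_le (hc : c ≤ 1 / 4) :
    ∫ x, exp (c * ((x + d) ^ 2 - (1 + d ^ 2))) ∂gaussianReal 0 1 ≤ exp (4 * c ^ 2 * (1 + d ^ 2)) := by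
  have h2c : 0 < 1 - 2 * c := by linarith
  have hsqrt : (√(1 - 2 * c))⁻¹ ≤ exp (c + 4 * c ^ 2) := by
    rw [← sqrt_inv, sqrt_le_iff, ← exp_nat_mul, Nat.cast_ofNat]
    refine ⟨(exp_pos _).le, (inv_one_sub_two_mul_le hc).trans ?_⟩
    linarith [add_one_le_exp (2 * (c + 4 * c ^ 2))]
  have hmean : c * d ^ 2 / (1 - 2 * c) ≤ (c + 4 * c ^ 2) * d ^ 2 := by
    rw [mul_div_right_comm]
    gcongr
    rw [div_le_iff₀ h2c]
    nlinarith [mul_nonneg (sq_nonneg c) (by linarith : (0 : ℝ) ≤ 1 - 4 * c)]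
  calc ∫ x, exp (c * ((x + d) ^ 2 - (1 + d ^ 2))) ∂gaussianReal 0 1
      = (√(1 - 2 * c))⁻¹ * exp (c * d ^ 2 / (1 - 2 * c)) * exp (-(c * (1 + d ^ 2))) := by
        rw [← integral_exp_mul_add_sq_gaussianReal d (by linarith), ← integral_mul_const]
        refine integral_congr_ae (ae_of_all _ fun x => ?_)
        simp only [← exp_add]
        ring_nf
    _ ≤ exp (c + 4 * c ^ 2) * exp ((c + 4 * c ^ 2) * d ^ 2) * exp (-(c * (1 + d ^ 2))) := by
        gcongr
    _ = exp (4 * c ^ 2 * (1 + d ^ 2)) := by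
        simp_rw [← exp_add]
        ring_nf
end

theorem measure_pi_gaussianReal_quadratic_ge_le {ι : Type*} [Fintype ι] {c : ι → ℝ}
    (hc : ∀ i, c i ≤ 1 / 4) (d : ι → ℝ) (a : ℝ) :
    Measure.pi (fun _ : ι => gaussianReal 0 1)
      {x | a ≤ ∑ i, c i * ((x i + d i) ^ 2 - (1 + d i ^ 2))}
      ≤ ENNReal.ofReal (exp (-a) * exp (∑ i, 4 * c i ^ 2 * (1 + d i ^ 2))) := by
  refine (measure_pi_le_exp_neg_mul_prod_integral
    (fun i => integrable_exp_mul_sq_sub_gaussianReal _ (by linarith [hc i]) _) a).trans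
    (ENNReal.ofReal_le_ofReal ?_)
  rw [exp_sum]
  gcongr with i
  exact integral_exp_mul_sq_sub_le _ (hc i)

theorem stmt_4_general (n : ℕ) (lam δ : Fin n → ℝ) (γ : ℝ) (hγpos : 0 < γ)
    (hγ : γ ^ 2 = ∑ i, lam i ^ 2 * (2 + 4 * δ i ^ 2))
    (η : ℝ) :
    (Measure.pi (fun _ : Fin n => gaussianReal 0 1))
      {x | η * γ ≤ ∑ i, lam i * ((x i + δ i) ^ 2 - (1 + δ i ^ 2))}
      ≤ ENNReal.ofReal (Real.exp (1 / 4) * Real.exp (-(η / Real.sqrt 8))) := by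
  set t := (√8 * γ)⁻¹ with ht_def
  have ht : 0 < t := by positivity
  have ht_sq : 8 * t ^ 2 * γ ^ 2 = 1 := by
    rw [ht_def, inv_pow, mul_pow, sq_sqrt (by norm_num)]
    field_simp
  have hc : ∀ i, t * lam i ≤ 1 / 4 := fun i => by
    have hlam : lam i ^ 2 * (2 + 4 * δ i ^ 2) ≤ γ ^ 2 :=
      hγ ▸ single_le_sum (f := fun j => lam j ^ 2 * (2 + 4 * δ j ^ 2))
        (fun j _ => by positivity) (mem_univ i)
    nlinarith [sq_nonneg (lam i * δ i), sq_nonneg (t * lam i - 1 / 4), sq_nonneg t]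
  have hset : {x : Fin n → ℝ | η * γ ≤ ∑ i, lam i * ((x i + δ i) ^ 2 - (1 + δ i ^ 2))}
      = {x | t * (η * γ) ≤ ∑ i, t * lam i * ((x i + δ i) ^ 2 - (1 + δ i ^ 2))} := by
    ext x
    simp only [Set.mem_ofPred_eq, mul_assoc, ← mul_sum]
    exact (mul_le_mul_iff_right₀ ht).symm
  have hsum : ∑ i, 4 * (t * lam i) ^ 2 * (1 + δ i ^ 2) ≤ 1 / 4 := calc
    _ ≤ ∑ i, 2 * t ^ 2 * (lam i ^ 2 * (2 + 4 * δ i ^ 2)) :=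
      sum_le_sum fun i _ => by nlinarith [sq_nonneg (t * lam i * δ i)]
    _ = 1 / 4 := by rw [← mul_sum, ← hγ]; linarith
  have hexp : t * (η * γ) = η / √8 := by
    rw [ht_def]
    field_simp
  rw [hset]
  refine (measure_pi_gaussianReal_quadratic_ge_le hc δ _).trans (ENNReal.ofReal_le_ofReal ?_)
  rw [hexp, mul_comm (exp (1 / 4))]
  gcongr

/-- Exponential inequality for quadratic functions of independent standard
Gaussians (Proposition: exponential chi2, second bound). -/
theorem stmt_4 (n : ℕ) (lam δ : Fin n → ℝ) (γ : ℝ) (hγpos : 0 < γ)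
    (hγ : γ ^ 2 = ∑ i, lam i ^ 2 * (2 + 4 * δ i ^ 2))
    (η : ℝ) (hη : 0 ≤ η) :
    (Measure.pi (fun _ : Fin n => gaussianReal 0 1))
      {x | η * γ ≤ ∑ i, lam i * ((x i + δ i) ^ 2 - (1 + δ i ^ 2))}
      ≤ ENNReal.ofReal (Real.exp (1 / 4) * Real.exp (-(η / Real.sqrt 8))) :=
  stmt_4_general n lam δ γ hγpos hγ η
end

section
/- Let F_n(·|δ²) be the distribution function of χ²_n(δ²) and 0 < u < 1/2. Then F_n^{-1}(u | δ²) ≥ n + δ² − √((4n + 8δ²)·log(1/u)). -/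
open MeasureTheory ProbabilityTheory Finset

/-- The noncentral chi-squared distribution `χ²_n(δ²)` with `δ² = ∑ i, δ i ^ 2`,
realized as the law of `∑ i, (Z i + δ i)^2` for i.i.d. standard Gaussians `Z i`. -/
noncomputable def noncentralChiSq (n : ℕ) (δ : Fin n → ℝ) : Measure ℝ :=
  Measure.map (fun x => ∑ i, (x i + δ i) ^ 2)
    (Measure.pi fun _ : Fin n => gaussianReal 0 1)

/-- The distribution function of `χ²_n(δ²)`. -/
noncomputable def noncentralChiSqCDF (n : ℕ) (δ : Fin n → ℝ) (t : ℝ) : ℝ :=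
  (noncentralChiSq n δ (Set.Iic t)).toReal

/-- The p-quantile of `χ²_n(δ²)`. -/
noncomputable def noncentralChiSqQuantile (n : ℕ) (δ : Fin n → ℝ) (p : ℝ) : ℝ :=
  sInf {t : ℝ | p ≤ noncentralChiSqCDF n δ t}

/-!
Chernoff bound on the lower tail. Completing the square gives
`E exp(-λ (Z + d)²) = exp(-λ d² / (1 + 2λ)) / √(1 + 2λ)` for a standard Gaussian `Z`,
and `log (1 + x) ≥ x - x² / 2` bounds this by `exp(-λ (1 + d²) + λ² (1 + 2 d²))`.
Multiplying over the coordinates, `F_n(t | δ²) ≤ exp(-λ a + λ² v)` for every `λ ≥ 0`,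
where `a = n + δ² - t` and `v = n + 2δ²`. If `a > √(4 v log(1/u))`, the choice
`λ = 2 log(1/u) / a` makes the right-hand side smaller than `u`, so such a `t` lies below
the `u`-quantile.
-/

open Real

lemma sub_sq_div_two_le_log_one_add {x : ℝ} (hx : 0 ≤ x) : x - x ^ 2 / 2 ≤ log (1 + x) := by
  refine le_trans ?_ (le_log_one_add_of_nonneg hx)
  rw [le_div_iff₀ (by linarith)]
  nlinarith [pow_nonneg hx 3]

lemma integral_exp_neg_mul_add_sq_gaussianReal {l : ℝ} (hl : 0 < 1 + 2 * l) (d : ℝ) :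
    ∫ y, exp (-(l * (y + d) ^ 2)) ∂gaussianReal 0 1
      = exp (-(l * d ^ 2) / (1 + 2 * l)) / √(1 + 2 * l) := by
  set b := l + 1 / 2 with hb_def
  have hb : 0 < b := by linarith
  have hsq : ∀ y : ℝ, gaussianPDFReal 0 1 y • exp (-(l * (y + d) ^ 2))
      = ((√(2 * π))⁻¹ * exp (-(l * d ^ 2) / (1 + 2 * l)))
        * exp (-b * (y + l * d / b) ^ 2) := by
    intro y
    simp only [gaussianPDFReal_def, NNReal.coe_one, mul_one, sub_zero, smul_eq_mul]
    rw [mul_assoc, mul_assoc, ← exp_add, ← exp_add]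
    congr 2
    field_simp
    ring
  have hnorm : √(π / b) * (√(2 * π))⁻¹ = (√(1 + 2 * l))⁻¹ := by
    rw [← sqrt_inv, ← sqrt_inv, ← sqrt_mul (by positivity)]
    congr 1
    field_simp
    ring
  rw [integral_gaussianReal_eq_integral_smul one_ne_zero]
  simp_rw [hsq]
  rw [integral_const_mul, integral_add_right_eq_self (fun y => exp (-b * y ^ 2)),
    integral_gaussian, div_eq_mul_inv _ (√(1 + 2 * l)), ← hnorm]
  ring

lemma integral_exp_neg_mul_add_sq_gaussianReal_le {l : ℝ} (hl : 0 ≤ l) (d : ℝ) :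
    ∫ y, exp (-(l * (y + d) ^ 2)) ∂gaussianReal 0 1
      ≤ exp (-l * (1 + d ^ 2) + l ^ 2 * (1 + 2 * d ^ 2)) := by
  have h2l : 0 < 1 + 2 * l := by linarith
  rw [integral_exp_neg_mul_add_sq_gaussianReal h2l, div_eq_mul_inv, ← sqrt_inv,
    sqrt_eq_rpow, ← exp_log (inv_pos.2 h2l), ← exp_mul, ← exp_add, exp_le_exp, log_inv]
  have hlog : 2 * l - (2 * l) ^ 2 / 2 ≤ log (1 + 2 * l) :=
    sub_sq_div_two_le_log_one_add (by linarith)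
  have hd : -(l * d ^ 2) / (1 + 2 * l) ≤ (-l + 2 * l ^ 2) * d ^ 2 := by
    rw [div_le_iff₀ h2l]
    nlinarith [mul_nonneg (pow_nonneg hl 3) (sq_nonneg d)]
  nlinarith

lemma measurable_sum_add_sq {n : ℕ} (δ : Fin n → ℝ) :
    Measurable fun x : Fin n → ℝ => ∑ i, (x i + δ i) ^ 2 :=
  Finset.measurable_sum _ fun i _ => by fun_prop

instance (n : ℕ) (δ : Fin n → ℝ) : IsProbabilityMeasure (noncentralChiSq n δ) :=
  Measure.isProbabilityMeasure_map (measurable_sum_add_sq δ).aemeasurable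

lemma noncentralChiSqCDF_eq_cdf (n : ℕ) (δ : Fin n → ℝ) :
    noncentralChiSqCDF n δ = cdf (noncentralChiSq n δ) :=
  funext fun t => (cdf_eq_real _ t).symm

lemma exists_le_noncentralChiSqCDF (n : ℕ) (δ : Fin n → ℝ) {p : ℝ} (hp : p < 1) :
    ∃ t, p ≤ noncentralChiSqCDF n δ t := by
  rw [noncentralChiSqCDF_eq_cdf]
  exact ((tendsto_cdf_atTop _).eventually (eventually_ge_nhds hp)).exists

lemma mgf_noncentralChiSq_neg_le (n : ℕ) (δ : Fin n → ℝ) {l : ℝ} (hl : 0 ≤ l) :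
    mgf id (noncentralChiSq n δ) (-l)
      ≤ exp (-l * (n + ∑ i, δ i ^ 2) + l ^ 2 * (n + 2 * ∑ i, δ i ^ 2)) := by
  calc mgf id (noncentralChiSq n δ) (-l)
      = ∏ i, ∫ y, exp (-(l * (y + δ i) ^ 2)) ∂gaussianReal 0 1 := by
        rw [mgf, noncentralChiSq,
          integral_map (measurable_sum_add_sq δ).aemeasurable (by fun_prop)]
        simp_rw [id, neg_mul, mul_sum, ← sum_neg_distrib, exp_sum]
        exact integral_fintype_prod_eq_prod fun i y => exp (-(l * (y + δ i) ^ 2))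
    _ ≤ ∏ i, exp (-l * (1 + δ i ^ 2) + l ^ 2 * (1 + 2 * δ i ^ 2)) :=
        prod_le_prod (fun _ _ => integral_nonneg fun _ => (exp_pos _).le)
          fun i _ => integral_exp_neg_mul_add_sq_gaussianReal_le hl (δ i)
    _ = exp (-l * (n + ∑ i, δ i ^ 2) + l ^ 2 * (n + 2 * ∑ i, δ i ^ 2)) := by
        rw [← exp_sum]
        simp only [mul_add, sum_add_distrib, ← mul_sum, sum_const, card_univ, Fintype.card_fin,
          nsmul_eq_mul]
        ring_nf

lemma noncentralChiSqCDF_le_exp (n : ℕ) (δ : Fin n → ℝ) {l : ℝ} (hl : 0 ≤ l) (t : ℝ) :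
    noncentralChiSqCDF n δ t
      ≤ exp (-l * (n + ∑ i, δ i ^ 2 - t) + l ^ 2 * (n + 2 * ∑ i, δ i ^ 2)) := by
  have hX := measurable_sum_add_sq δ
  have hint : Integrable (fun x => exp (-l * id x)) (noncentralChiSq n δ) := by
    rw [noncentralChiSq, integrable_map_measure (by fun_prop) hX.aemeasurable]
    refine Integrable.mono' (integrable_const 1)
      ((measurable_exp.comp (measurable_id.const_mul (-l))).comp hX).aestronglyMeasurable
      (ae_of_all _ fun x => ?_)
    rw [Function.comp_apply, id, norm_of_nonneg (exp_pos _).le, exp_le_one_iff]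
    exact mul_nonpos_of_nonpos_of_nonneg (neg_nonpos.2 hl) (sum_nonneg fun i _ => sq_nonneg _)
  calc noncentralChiSqCDF n δ t ≤ exp (-(-l) * t) * mgf id (noncentralChiSq n δ) (-l) :=
        measure_le_le_exp_mul_mgf t (neg_nonpos.2 hl) hint
    _ ≤ exp (-(-l) * t) * exp (-l * (n + ∑ i, δ i ^ 2) + l ^ 2 * (n + 2 * ∑ i, δ i ^ 2)) :=
        mul_le_mul_of_nonneg_left (mgf_noncentralChiSq_neg_le n δ hl) (exp_pos _).le
    _ = exp (-l * (n + ∑ i, δ i ^ 2 - t) + l ^ 2 * (n + 2 * ∑ i, δ i ^ 2)) := by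
        rw [← exp_add]; ring_nf

lemma lt_exp_neg_of_forall_le_exp {F a v L : ℝ} (hL : 0 < L)
    (ha : √(4 * v * L) < a)
    (hF : ∀ l, 0 ≤ l → F ≤ exp (-l * a + l ^ 2 * v)) : F < exp (-L) := by
  have ha0 : 0 < a := (sqrt_nonneg _).trans_lt ha
  have ha2 : 4 * v * L < a ^ 2 := (sqrt_lt' ha0).1 ha
  refine (hF (2 * L / a) (by positivity)).trans_lt (exp_lt_exp.2 ?_)
  rw [div_pow, ← sub_neg, show -(2 * L / a) * a + (2 * L) ^ 2 / a ^ 2 * v - -L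
    = L * (4 * v * L - a ^ 2) / a ^ 2 by field_simp; ring]
  exact div_neg_of_neg_of_pos (mul_neg_of_pos_of_neg hL (by linarith)) (by positivity)

theorem stmt_9_general (n : ℕ) (δ : Fin n → ℝ) (δsq : ℝ)
    (hδ : δsq = ∑ i, δ i ^ 2) (u : ℝ) (hu0 : 0 < u) (hu : u < 1 / 2) :
    noncentralChiSqQuantile n δ u
      ≥ n + δsq - Real.sqrt ((4 * n + 8 * δsq) * Real.log u⁻¹) := by
  subst hδ
  have hL : 0 < log u⁻¹ := log_pos ((one_lt_inv₀ hu0).2 (by linarith))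
  refine le_csInf (exists_le_noncentralChiSqCDF n δ (by linarith)) fun t ht => ?_
  by_contra! ht'
  have hlt := lt_exp_neg_of_forall_le_exp (a := n + ∑ i, δ i ^ 2 - t) hL
    (by rw [show 4 * (n + 2 * ∑ i, δ i ^ 2) = 4 * (n : ℝ) + 8 * ∑ i, δ i ^ 2 by ring]
        linarith)
    fun l hl => noncentralChiSqCDF_le_exp n δ hl t
  rw [exp_neg, exp_log (inv_pos.2 hu0), inv_inv] at hlt
  exact ht.not_gt hlt

theorem stmt_9 (n : ℕ) (hn : 1 ≤ n) (δ : Fin n → ℝ) (δsq : ℝ)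
    (hδ : δsq = ∑ i, δ i ^ 2) (u : ℝ) (hu0 : 0 < u) (hu : u < 1 / 2) :
    noncentralChiSqQuantile n δ u
      ≥ n + δsq - Real.sqrt ((4 * n + 8 * δsq) * Real.log u⁻¹) :=
  stmt_9_general n δ δsq hδ u hu0 hu
end

section
/- Let F_n(·|δ²) be the noncentral chi-squared distribution function and u ∈ (0,1/2). If a number δ̂ ≥ 0 satisfies u ≤ F_n(n + δ̂² | δ²) ≤ 1 − u, then δ² − δ̂² ≤ √((4n + 8δ̂²)·log(1/u)) + 8·log(1/u) and δ² − δ̂² ≥ −√((4n + 8δ̂²)·log(1/u)). -/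
open MeasureTheory ProbabilityTheory Finset

/-!
Write `X ~ χ²_n(δ²)`. Its cumulant generating function `t δ² / (1 - 2t) - (n/2) log (1 - 2t)` is at
most `t (n + δ²) + t² (n + 2δ²) / (1 - 2t)` for `0 ≤ t < 1/2` (from `log y ≤ sinh (log y)` with
`y = (1 - 2t)⁻¹`) and at most `t (n + δ²) + t² (n + 2δ²)` for `t ≤ 0`. Chernoff's inequality turns
these into `P(X ≥ n + δ² + r) ≤ exp (-r² / (4 (n + 2δ² + r)))` and
`P(X ≤ n + δ² - r) ≤ exp (-r² / (4 (n + 2δ²)))`. Since both tails at `n + δ̂²` have probability at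
least `u`, the number `r = ±(δ² - δ̂²)` satisfies a quadratic inequality, which solves to the bounds.
-/

open Real

lemma Real.neg_log_le_inv_sub_self_div_two {x : ℝ} (hx0 : 0 < x) (hx1 : x ≤ 1) :
    -log x ≤ (x⁻¹ - x) / 2 := by
  have h := self_le_sinh_iff.2 (log_nonneg ((one_le_inv₀ hx0).2 hx1))
  rwa [sinh_log (inv_pos.2 hx0), inv_inv, log_inv] at h

lemma sq_le_mul_log_inv_of_le_exp_neg {u r w : ℝ} (hu : 0 < u) (hw : 0 < w)
    (h : u ≤ exp (-(r ^ 2 / w))) : r ^ 2 ≤ w * log u⁻¹ := by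
  rw [← log_le_iff_le_exp hu] at h
  rw [log_inv, ← div_le_iff₀' hw]
  linarith

section Chernoff

variable {Ω : Type*} {mΩ : MeasurableSpace Ω} {μ : Measure Ω} [IsFiniteMeasure μ]
  {X : Ω → ℝ} {m v r : ℝ}

lemma measureReal_ge_le_exp_of_mgf_le (hv : 0 < v) (hr : 0 ≤ r)
    (hint : ∀ t, 0 ≤ t → t < 1 / 2 → Integrable (fun ω ↦ exp (t * X ω)) μ)
    (hmgf : ∀ t, 0 ≤ t → t < 1 / 2 → mgf X μ t ≤ exp (t * m + t ^ 2 * v / (1 - 2 * t))) :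
    μ.real {ω | m + r ≤ X ω} ≤ exp (-(r ^ 2 / (4 * (v + r)))) := by
  set t := r / (2 * (v + r))
  have ht0 : 0 ≤ t := by positivity
  have ht : t < 1 / 2 := by rw [div_lt_iff₀ (by positivity)]; linarith
  have hvr : 1 - 2 * t = v / (v + r) := by simp only [t]; field_simp; ring
  calc μ.real {ω | m + r ≤ X ω} ≤ exp (-t * (m + r)) * mgf X μ t :=
        measure_ge_le_exp_mul_mgf _ ht0 (hint t ht0 ht)
    _ ≤ exp (-t * (m + r)) * exp (t * m + t ^ 2 * v / (1 - 2 * t)) := by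
        gcongr; exact hmgf t ht0 ht
    _ = exp (-(r ^ 2 / (4 * (v + r)))) := by
        rw [← exp_add, hvr]; congr 1; simp only [t]; field_simp; ring

lemma measureReal_le_le_exp_of_mgf_le (hv : 0 < v) (hr : 0 ≤ r)
    (hint : ∀ t ≤ 0, Integrable (fun ω ↦ exp (t * X ω)) μ)
    (hmgf : ∀ t ≤ 0, mgf X μ t ≤ exp (t * m + t ^ 2 * v)) :
    μ.real {ω | X ω ≤ m - r} ≤ exp (-(r ^ 2 / (4 * v))) := by
  set t := -(r / (2 * v))
  have ht : t ≤ 0 := neg_nonpos.2 (by positivity)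
  calc μ.real {ω | X ω ≤ m - r} ≤ exp (-t * (m - r)) * mgf X μ t :=
        measure_le_le_exp_mul_mgf _ ht (hint t ht)
    _ ≤ exp (-t * (m - r)) * exp (t * m + t ^ 2 * v) := by
        gcongr; exact hmgf t ht
    _ = exp (-(r ^ 2 / (4 * v))) := by
        rw [← exp_add]; congr 1; simp only [t]; field_simp; ring

end Chernoff

lemma mgf_add_sq_gaussianReal (d : ℝ) {t : ℝ} (ht : t < 1 / 2) :
    mgf (fun y ↦ (y + d) ^ 2) (gaussianReal 0 1) t
      = exp (t * d ^ 2 / (1 - 2 * t) - log (1 - 2 * t) / 2) := by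
  have hx : 0 < 1 - 2 * t := by linarith
  set c := 2 * t * d / (1 - 2 * t)
  have hsquare : ∀ y, gaussianPDFReal 0 1 y * exp (t * (y + d) ^ 2)
      = (√(2 * π))⁻¹ * exp (t * d ^ 2 / (1 - 2 * t)) * exp (-(1 / 2 - t) * (y - c) ^ 2) := by
    intro y
    rw [gaussianPDFReal, mul_assoc, ← exp_add, mul_assoc (√(2 * π))⁻¹, ← exp_add]
    congr 2
    · simp
    · simp only [c, NNReal.coe_one]; field_simp; ring
  have hsqrt : (√(2 * π))⁻¹ * √(π / (1 / 2 - t)) = exp (-log (1 - 2 * t) / 2) := by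
    rw [neg_div, ← log_sqrt hx.le, ← log_inv, exp_log (by positivity), ← sqrt_inv,
      ← sqrt_inv, ← sqrt_mul (by positivity)]
    congr 1; field_simp
  rw [mgf, integral_gaussianReal_eq_integral_smul one_ne_zero]
  simp_rw [smul_eq_mul, hsquare]
  rw [integral_const_mul, integral_sub_right_eq_self (fun y ↦ exp (-(1 / 2 - t) * y ^ 2)),
    integral_gaussian, mul_right_comm, hsqrt, ← exp_add]
  ring_nf

lemma noncentralChiSqCDF_fin_zero (δ : Fin 0 → ℝ) {t : ℝ} (ht : 0 ≤ t) :
    noncentralChiSqCDF 0 δ t = 1 := by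
  simp [noncentralChiSqCDF, noncentralChiSq, Measure.map_const, ht]

section NoncentralChiSq

variable {n : ℕ} {δ : Fin n → ℝ}

instance : IsProbabilityMeasure (noncentralChiSq n δ) :=
  Measure.isProbabilityMeasure_map (by fun_prop : Measurable _).aemeasurable

lemma noncentralChiSqCDF_eq_measureReal (t : ℝ) :
    noncentralChiSqCDF n δ t = (noncentralChiSq n δ).real (Set.Iic t) := rfl

lemma mgf_id_noncentralChiSq {t : ℝ} (ht : t < 1 / 2) :
    mgf id (noncentralChiSq n δ) t
      = exp (t * (∑ i, δ i ^ 2) / (1 - 2 * t) - n * log (1 - 2 * t) / 2) := by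
  rw [noncentralChiSq, mgf_id_map (by fun_prop : Measurable _).aemeasurable]
  calc mgf (fun x : Fin n → ℝ ↦ ∑ i, (x i + δ i) ^ 2) (Measure.pi fun _ ↦ gaussianReal 0 1) t
      = ∫ x : Fin n → ℝ, ∏ i, exp (t * (x i + δ i) ^ 2) ∂Measure.pi fun _ ↦ gaussianReal 0 1 := by
        simp_rw [mgf, mul_sum, exp_sum]
    _ = ∏ i, mgf (fun y ↦ (y + δ i) ^ 2) (gaussianReal 0 1) t :=
        integral_fintype_prod_eq_prod fun i y ↦ exp (t * (y + δ i) ^ 2)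
    _ = _ := by
        simp_rw [mgf_add_sq_gaussianReal _ ht, ← exp_sum, sum_sub_distrib, ← sum_div, ← mul_sum]
        simp

lemma integrable_exp_mul_noncentralChiSq {t : ℝ} (ht : t < 1 / 2) :
    Integrable (fun x ↦ exp (t * x)) (noncentralChiSq n δ) :=
  -- a non-integrable function would have Bochner integral `0`
  .of_integral_ne_zero ((mgf_id_noncentralChiSq ht).trans_ne (exp_pos _).ne')

lemma mgf_id_noncentralChiSq_le_of_nonneg {t : ℝ} (ht0 : 0 ≤ t) (ht : t < 1 / 2) :
    mgf id (noncentralChiSq n δ) t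
      ≤ exp (t * (n + ∑ i, δ i ^ 2) + t ^ 2 * (n + 2 * ∑ i, δ i ^ 2) / (1 - 2 * t)) := by
  have hlog := neg_log_le_inv_sub_self_div_two (x := 1 - 2 * t) (by linarith) (by linarith)
  rw [mgf_id_noncentralChiSq ht, exp_le_exp]
  calc t * (∑ i, δ i ^ 2) / (1 - 2 * t) - n * log (1 - 2 * t) / 2
      ≤ t * (∑ i, δ i ^ 2) / (1 - 2 * t) + n * (((1 - 2 * t)⁻¹ - (1 - 2 * t)) / 4) := by
        linarith [mul_le_mul_of_nonneg_left hlog n.cast_nonneg]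
    _ = _ := by field_simp [show 1 - t * 2 ≠ 0 by linarith]; ring

lemma mgf_id_noncentralChiSq_le_of_nonpos {t : ℝ} (ht : t ≤ 0) :
    mgf id (noncentralChiSq n δ) t
      ≤ exp (t * (n + ∑ i, δ i ^ 2) + t ^ 2 * (n + 2 * ∑ i, δ i ^ 2)) := by
  have hx : 0 < 1 - 2 * t := by linarith
  have ht3 : 0 ≤ -t ^ 3 := neg_nonneg.2 (Odd.pow_nonpos (by decide) ht)
  have hD : 0 ≤ ∑ i, δ i ^ 2 := sum_nonneg fun i _ ↦ sq_nonneg (δ i)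
  have hquot : t * (∑ i, δ i ^ 2) / (1 - 2 * t) ≤ t * ∑ i, δ i ^ 2 + 2 * t ^ 2 * ∑ i, δ i ^ 2 := by
    rw [div_le_iff₀ hx]; nlinarith [mul_nonneg ht3 hD]
  have hlog : -log (1 - 2 * t) / 2 ≤ t + t ^ 2 := by
    have h := le_log_one_add_of_nonneg (x := -(2 * t)) (by linarith)
    rw [div_le_iff₀ (by linarith), ← sub_eq_add_neg] at h
    nlinarith
  rw [mgf_id_noncentralChiSq (by linarith), exp_le_exp]
  linarith [mul_le_mul_of_nonneg_left hlog n.cast_nonneg]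

lemma noncentralChiSq_real_Ici_le (hv : 0 < n + 2 * ∑ i, δ i ^ 2) {r : ℝ} (hr : 0 ≤ r) :
    (noncentralChiSq n δ).real (Set.Ici (n + ∑ i, δ i ^ 2 + r))
      ≤ exp (-(r ^ 2 / (4 * (n + 2 * ∑ i, δ i ^ 2 + r)))) :=
  measureReal_ge_le_exp_of_mgf_le (X := id) hv hr
    (fun _ _ ht ↦ integrable_exp_mul_noncentralChiSq ht)
    (fun _ ht0 ht ↦ mgf_id_noncentralChiSq_le_of_nonneg ht0 ht)

lemma noncentralChiSq_real_Iic_le (hv : 0 < n + 2 * ∑ i, δ i ^ 2) {r : ℝ} (hr : 0 ≤ r) :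
    (noncentralChiSq n δ).real (Set.Iic (n + ∑ i, δ i ^ 2 - r))
      ≤ exp (-(r ^ 2 / (4 * (n + 2 * ∑ i, δ i ^ 2)))) :=
  measureReal_le_le_exp_of_mgf_le (X := id) hv hr
    (fun _ ht ↦ integrable_exp_mul_noncentralChiSq (by linarith))
    (fun _ ht ↦ mgf_id_noncentralChiSq_le_of_nonpos ht)

lemma sum_sq_sub_le_of_le_noncentralChiSqCDF {u y : ℝ} (hu : 0 < u) (hy : 0 ≤ y)
    (h : u ≤ noncentralChiSqCDF n δ (n + y)) :
    ∑ i, δ i ^ 2 - y ≤ √((4 * n + 8 * y) * log u⁻¹) + 8 * log u⁻¹ := by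
  rw [noncentralChiSqCDF_eq_measureReal] at h
  have hc : 0 ≤ log u⁻¹ := log_nonneg ((one_le_inv₀ hu).2 (h.trans measureReal_le_one))
  have hs := sqrt_nonneg ((4 * n + 8 * y) * log u⁻¹)
  set r := ∑ i, δ i ^ 2 - y
  rcases le_or_gt r 0 with hr | hr
  · linarith
  have hv : (0 : ℝ) < n + 2 * ∑ i, δ i ^ 2 := by linarith [n.cast_nonneg (α := ℝ)]
  have htail := noncentralChiSq_real_Iic_le hv hr.le
  rw [show (n : ℝ) + ∑ i, δ i ^ 2 - r = n + y by ring] at htail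
  have hsq := sq_le_mul_log_inv_of_le_exp_neg hu (by linarith) (h.trans htail)
  have hs2 := sq_sqrt (show 0 ≤ (4 * n + 8 * y) * log u⁻¹ by positivity)
  -- `r ^ 2 ≤ s ^ 2 + 8 r log u⁻¹`, with `s` the square root, forces `r ≤ s + 8 log u⁻¹`
  nlinarith

lemma neg_sqrt_le_sum_sq_sub_of_noncentralChiSqCDF_le {u y : ℝ} (hu : 0 < u)
    (h : noncentralChiSqCDF n δ (n + y) ≤ 1 - u) :
    -√((4 * n + 8 * y) * log u⁻¹) ≤ ∑ i, δ i ^ 2 - y := by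
  set r := y - ∑ i, δ i ^ 2
  rcases le_or_gt r 0 with hr | hr
  · linarith [sqrt_nonneg ((4 * n + 8 * y) * log u⁻¹)]
  have hD : 0 ≤ ∑ i, δ i ^ 2 := sum_nonneg fun i _ ↦ sq_nonneg (δ i)
  obtain rfl | hn := n.eq_zero_or_pos
  · rw [noncentralChiSqCDF_fin_zero δ (by linarith)] at h
    linarith
  rw [noncentralChiSqCDF_eq_measureReal] at h
  have hc : 0 ≤ log u⁻¹ :=
    log_nonneg ((one_le_inv₀ hu).2 (by linarith [measureReal_nonneg.trans h]))
  have hv : (0 : ℝ) < n + 2 * ∑ i, δ i ^ 2 := by positivity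
  have htail := noncentralChiSq_real_Ici_le hv hr.le
  rw [show (n : ℝ) + ∑ i, δ i ^ 2 + r = n + y by ring] at htail
  have hIci : u ≤ (noncentralChiSq n δ).real (Set.Ici (n + y)) :=
    calc u ≤ 1 - (noncentralChiSq n δ).real (Set.Iic (n + y)) := by linarith
      _ = (noncentralChiSq n δ).real (Set.Ioi (n + y)) := by
        rw [← Set.compl_Iic, probReal_compl_eq_one_sub measurableSet_Iic]
      _ ≤ (noncentralChiSq n δ).real (Set.Ici (n + y)) :=
        measureReal_mono Set.Ioi_subset_Ici_self
  have hsq := sq_le_mul_log_inv_of_le_exp_neg hu (by linarith) (hIci.trans htail)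
  have hrs : r ≤ √((4 * n + 8 * y) * log u⁻¹) :=
    (le_sqrt hr.le (mul_nonneg (by linarith) hc)).2 (hsq.trans (by gcongr; linarith))
  linarith

end NoncentralChiSq

theorem stmt_10_general (n : ℕ) (δ : Fin n → ℝ) (δsq : ℝ) (hδ : δsq = ∑ i, δ i ^ 2)
    (u : ℝ) (hu0 : 0 < u)
    (δhat : ℝ)
    (hl : u ≤ noncentralChiSqCDF n δ (n + δhat ^ 2))
    (hr : noncentralChiSqCDF n δ (n + δhat ^ 2) ≤ 1 - u) :
    δsq - δhat ^ 2
        ≤ Real.sqrt ((4 * n + 8 * δhat ^ 2) * Real.log u⁻¹) + 8 * Real.log u⁻¹ ∧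
    δsq - δhat ^ 2
        ≥ -Real.sqrt ((4 * n + 8 * δhat ^ 2) * Real.log u⁻¹) := by
  subst hδ
  exact ⟨sum_sq_sub_le_of_le_noncentralChiSqCDF hu0 (sq_nonneg δhat) hl,
    neg_sqrt_le_sum_sq_sub_of_noncentralChiSqCDF_le hu0 hr⟩

theorem stmt_10 (n : ℕ) (δ : Fin n → ℝ) (δsq : ℝ) (hδ : δsq = ∑ i, δ i ^ 2)
    (u : ℝ) (hu0 : 0 < u) (hu : u < 1 / 2)
    (δhat : ℝ) (hδhat : 0 ≤ δhat)
    (hl : u ≤ noncentralChiSqCDF n δ (n + δhat ^ 2))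
    (hr : noncentralChiSqCDF n δ (n + δhat ^ 2) ≤ 1 - u) :
    δsq - δhat ^ 2
        ≤ Real.sqrt ((4 * n + 8 * δhat ^ 2) * Real.log u⁻¹) + 8 * Real.log u⁻¹ ∧
    δsq - δhat ^ 2
        ≥ -Real.sqrt ((4 * n + 8 * δhat ^ 2) * Real.log u⁻¹) :=
  stmt_10_general n δ δsq hδ u hu0 δhat hl hr
end
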